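/- Let b ∈ (0, +∞] and let (H, φ) solve the EdGB FLRW system on [0, b) with the negative-branch initial data with parameter β. Then H(t) < 1/((1/2)t + 1/β) for all t ∈ (0, b). -/

import Mathlib

/-!
Write `X = e^φ H²`. Differentiating the Hamiltonian constraint and eliminating `φ''` with the
scalar field equation determines `H'` algebraically; while `H > 0`, `φ' < 0` and `X < 1/6` this
gives `-3H² ≤ H' < -H²/2`. The sign of `φ'` cannot change while `H > 0`, because `φ' = 0` forces
`H = 0` in the constraint and derivatives have the intermediate value property. A continuity
argument then keeps `H > 0` (by `H' ≥ -3H²`) and `X < 1/6` (as `X' = e^φ H (φ' H + 2H') < 0`) on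
all of `[0, t]`, and integrating `(1/H)' > 1/2` gives the bound.
-/

open Real Set

/-- The EdGB FLRW system on a set `I ⊆ ℝ`: `H` is continuously differentiable and
`φ` twice continuously differentiable on `I`, and for every `t ∈ I` the Hamiltonian
constraint `3H² − 3e^φ φ' H³ = φ'²/2` and the scalar field equation
`φ'' = −3Hφ' − 3e^φ H²(H² + H')` hold. -/
def EdGB (H φ : ℝ → ℝ) (I : Set ℝ) : Prop :=
  ContDiffOn ℝ 1 H I ∧ ContDiffOn ℝ 2 φ I ∧
  (∀ t ∈ I, 3 * H t ^ 2 - 3 * Real.exp (φ t) * deriv φ t * H t ^ 3 = (deriv φ t) ^ 2 / 2) ∧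
  (∀ t ∈ I, deriv (deriv φ) t =
      -3 * H t * deriv φ t - 3 * Real.exp (φ t) * H t ^ 2 * (H t ^ 2 + deriv H t))

/-- The negative-branch initial data with parameter `β`:
`H(0) = β`, `φ(0) = 0`, `φ'(0) = −3β³ − √(9β⁶ + 6β²)`, with `0 < β < √6/6`. -/
def NegBranchData (H φ : ℝ → ℝ) (β : ℝ) : Prop :=
  0 < β ∧ β < Real.sqrt 6 / 6 ∧ H 0 = β ∧ φ 0 = 0 ∧
  deriv φ 0 = -3 * β ^ 3 - Real.sqrt (9 * β ^ 6 + 6 * β ^ 2)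

theorem Icc_subset_of_forall_Ico_subset {α : Type*} [ConditionallyCompleteLinearOrder α]
    [TopologicalSpace α] [OrderTopology α] {a b : α} {s : Set α} (hs : IsClosed (Icc a b \ s))
    (h : ∀ x ∈ Icc a b, Ico a x ⊆ s → x ∈ s) : Icc a b ⊆ s := by
  by_contra hsub
  obtain ⟨z, hz, hzs⟩ := not_subset.1 hsub
  have hbdd : BddBelow (Icc a b \ s) := ⟨a, fun y hy => hy.1.1⟩
  obtain ⟨hx, hxs⟩ := hs.csInf_mem ⟨z, hz, hzs⟩ hbdd
  refine hxs (h _ hx fun y hy => ?_)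
  by_contra hys
  exact (csInf_le hbdd ⟨⟨hy.1, hy.2.le.trans hx.2⟩, hys⟩).not_gt hy.2

theorem deriv_neg_of_deriv_ne_zero {f : ℝ → ℝ} {a b : ℝ}
    (hf : ∀ x ∈ Ico a b, DifferentiableAt ℝ f x) (ha : deriv f a < 0)
    (hne : ∀ x ∈ Ioo a b, deriv f x ≠ 0) : ∀ x ∈ Ioo a b, deriv f x < 0 := by
  intro x hx
  by_contra hpos
  have hpos : 0 < deriv f x := lt_of_le_of_ne (not_lt.mp hpos) (hne x hx).symm
  obtain ⟨y, hy, hy0⟩ := (ordConnected_Ico.image_deriv hf).out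
    (mem_image_of_mem _ ⟨le_rfl, hx.1.trans hx.2⟩) (mem_image_of_mem _ (Ioo_subset_Ico_self hx))
    ⟨ha.le, hpos.le⟩
  rcases hy.1.eq_or_lt with rfl | hay
  · exact ha.ne hy0
  · exact hne y ⟨hay, hy.2⟩ hy0

section Riccati

variable {f f' : ℝ → ℝ} {D : Set ℝ} {c : ℝ}

theorem hasDerivAt_inv_sub_mul {x : ℝ} (hf : HasDerivAt f (f' x) x) (hx : f x ≠ 0) :
    HasDerivAt (fun y => (f y)⁻¹ - c * y) (-f' x / f x ^ 2 - c) x := by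
  simpa using (hf.inv hx).fun_sub ((hasDerivAt_id x).const_mul c)

theorem strictMonoOn_inv_sub_mul (hD : Convex ℝ D) (hf : ContinuousOn f D)
    (hpos : ∀ x ∈ D, 0 < f x) (hderiv : ∀ x ∈ interior D, HasDerivAt f (f' x) x)
    (hlt : ∀ x ∈ interior D, f' x < -c * f x ^ 2) :
    StrictMonoOn (fun x => (f x)⁻¹ - c * x) D := by
  refine strictMonoOn_of_deriv_pos hD ((hf.inv₀ fun x hx => (hpos x hx).ne').sub
    (continuousOn_const.mul continuousOn_id)) fun x hx => ?_
  have hfx := hpos x (interior_subset hx)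
  rw [(hasDerivAt_inv_sub_mul (hderiv x hx) hfx.ne').deriv, sub_pos, lt_div_iff₀ (by positivity)]
  linarith [hlt x hx]

theorem antitoneOn_inv_sub_mul (hD : Convex ℝ D) (hf : ContinuousOn f D)
    (hpos : ∀ x ∈ D, 0 < f x) (hderiv : ∀ x ∈ interior D, HasDerivAt f (f' x) x)
    (hle : ∀ x ∈ interior D, -c * f x ^ 2 ≤ f' x) :
    AntitoneOn (fun x => (f x)⁻¹ - c * x) D := by
  refine antitoneOn_of_deriv_nonpos hD ((hf.inv₀ fun x hx => (hpos x hx).ne').sub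
    (continuousOn_const.mul continuousOn_id))
    (fun x hx => (hasDerivAt_inv_sub_mul (hderiv x hx)
      (hpos x (interior_subset hx)).ne').differentiableAt.differentiableWithinAt)
    fun x hx => ?_
  have hfx := hpos x (interior_subset hx)
  rw [(hasDerivAt_inv_sub_mul (hderiv x hx) hfx.ne').deriv, sub_nonpos, div_le_iff₀ (by positivity)]
  linarith [hle x hx]

theorem pos_of_neg_mul_sq_le_deriv {a b : ℝ} (hab : a < b) (hc : 0 ≤ c)
    (hf : ContinuousOn f (Icc a b)) (hpos : ∀ x ∈ Ico a b, 0 < f x)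
    (hderiv : ∀ x ∈ Ioo a b, HasDerivAt f (f' x) x) (hle : ∀ x ∈ Ioo a b, -c * f x ^ 2 ≤ f' x) :
    0 < f b := by
  have hfa := hpos a ⟨le_rfl, hab⟩
  have hanti := antitoneOn_inv_sub_mul (convex_Ico a b) (hf.mono Ico_subset_Icc_self) hpos
    (by simpa using hderiv) (by simpa using hle)
  have hlow : ∀ x ∈ Ico a b, ((f a)⁻¹ + c * (b - a))⁻¹ ≤ f x := by
    intro x hx
    have := hanti ⟨le_rfl, hab⟩ hx hx.1
    simp only at this
    rw [inv_le_comm₀ (by positivity) (hpos x hx)]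
    nlinarith [hx.2]
  calc 0 < ((f a)⁻¹ + c * (b - a))⁻¹ := by have := sub_pos.2 hab; positivity
    _ ≤ f b := ContinuousWithinAt.closure_le (by rw [closure_Ico hab.ne]; exact ⟨hab.le, le_rfl⟩)
        continuousWithinAt_const
        ((hf.continuousWithinAt ⟨hab.le, le_rfl⟩).mono Ico_subset_Icc_self) hlow

end Riccati

-- `h, d, e, h', d'` stand for `H, φ', e^φ, H', φ''` at one instant.
theorem hubble_rate_bounds {h d e h' d' : ℝ} (hh : 0 < h) (he : 0 < e) (hx : e * h ^ 2 < 1 / 6)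
    (hd : d < 0) (hcon : 3 * h ^ 2 - 3 * e * d * h ^ 3 = d ^ 2 / 2)
    (hscal : d' = -3 * h * d - 3 * e * h ^ 2 * (h ^ 2 + h'))
    (hcon' : 6 * h * h' - 3 * (e * d * d * h ^ 3 + e * d' * h ^ 3 + e * d * (3 * h ^ 2 * h'))
      - d * d' = 0) :
    h' < -h ^ 2 / 2 ∧ -3 * h ^ 2 ≤ h' := by
  have hed : 0 < -(e * d) := by nlinarith
  obtain ⟨A, hA_def⟩ : ∃ A, A = 6 * h + 9 * e ^ 2 * h ^ 5 + 6 * -(e * d) * h ^ 2 := ⟨_, rfl⟩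
  have hA : 0 < A := by rw [hA_def]; positivity
  -- eliminating `d'` leaves `h' * A` as a polynomial in `h, d, e`
  have hrate : h' * A =
      -(3 * h * d ^ 2 - 3 * e * d ^ 2 * h ^ 3 + 12 * e * h ^ 4 * d + 9 * e ^ 2 * h ^ 7) := by
    linear_combination hcon' + (3 * e * h ^ 3 + d) * hscal + h' * hA_def
  have hupper : 0 < A * (-h ^ 2 / 2 - h') := by
    have hq : 0 < 10 - 12 * (e * h ^ 2) + 3 * (e * h ^ 2) ^ 2 := by
      nlinarith [sq_nonneg (e * h ^ 2)]
    have h1 : 0 < 1 - 6 * (e * h ^ 2) := by linarith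
    have : A * (-h ^ 2 / 2 - h') = 3 / 2 * h ^ 3 * (10 - 12 * (e * h ^ 2) + 3 * (e * h ^ 2) ^ 2)
        + 3 * -(e * d) * h ^ 4 * (1 - 6 * (e * h ^ 2)) := by
      linear_combination -hrate + (6 * e * h ^ 3 - 6 * h) * hcon - h ^ 2 / 2 * hA_def
    rw [this]
    positivity
  have hlower : 0 ≤ A * (h' + 3 * h ^ 2) := by
    have : A * (h' + 3 * h ^ 2) =
        18 * e ^ 2 * h ^ 7 + 12 * -(e * d) * h ^ 4 + 18 * e * h ^ 5
          + 18 * e * -(e * d) * h ^ 6 := by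
      linear_combination hrate + (6 * h - 6 * e * h ^ 3) * hcon + 3 * h ^ 2 * hA_def
    rw [this]
    positivity
  exact ⟨by linarith [pos_of_mul_pos_right hupper hA.le],
    by linarith [nonneg_of_mul_nonneg_right hlower hA]⟩

namespace EdGB

variable {H φ : ℝ → ℝ}

theorem mono {I J : Set ℝ} (h : EdGB H φ I) (hJ : J ⊆ I) : EdGB H φ J :=
  ⟨h.1.mono hJ, h.2.1.mono hJ, fun t ht => h.2.2.1 t (hJ ht), fun t ht => h.2.2.2 t (hJ ht)⟩

theorem deriv_ne_zero {I : Set ℝ} (h : EdGB H φ I) {s : ℝ} (hs : s ∈ I) (hH : H s ≠ 0) :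
    deriv φ s ≠ 0 := by
  intro hφ'
  have := h.2.2.1 s hs
  rw [hφ'] at this
  exact hH (by simpa using this)

section Open

variable {U : Set ℝ} (h : EdGB H φ U) (hU : IsOpen U) {s : ℝ} (hs : s ∈ U)
include h hU hs

theorem hasDerivAt_hubble : HasDerivAt H (deriv H s) s :=
  ((h.1.differentiableOn one_ne_zero).differentiableAt (hU.mem_nhds hs)).hasDerivAt

theorem hasDerivAt_scalar : HasDerivAt φ (deriv φ s) s :=
  ((h.2.1.differentiableOn two_ne_zero).differentiableAt (hU.mem_nhds hs)).hasDerivAt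

theorem hasDerivAt_deriv_scalar : HasDerivAt (deriv φ) (deriv (deriv φ) s) s :=
  (((h.2.1.deriv_of_isOpen hU le_rfl).differentiableOn one_ne_zero).differentiableAt
    (hU.mem_nhds hs)).hasDerivAt

theorem deriv_constraint :
    6 * H s * deriv H s - 3 * (exp (φ s) * deriv φ s * deriv φ s * H s ^ 3
        + exp (φ s) * deriv (deriv φ) s * H s ^ 3
        + exp (φ s) * deriv φ s * (3 * H s ^ 2 * deriv H s))
      - deriv φ s * deriv (deriv φ) s = 0 := by
  have hH := h.hasDerivAt_hubble hU hs
  have hφ' := h.hasDerivAt_deriv_scalar hU hs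
  have hF := (((hH.fun_pow 2).const_mul 3).fun_sub
    ((((h.hasDerivAt_scalar hU hs).exp.fun_mul hφ').fun_mul (hH.fun_pow 3)).const_mul 3)).fun_sub
    ((hφ'.fun_pow 2).div_const 2)
  have hF0 := hF.unique <| (hasDerivAt_const s 0).congr_of_eventuallyEq <|
    Filter.eventually_of_mem (hU.mem_nhds hs) fun u hu => by linear_combination h.2.2.1 u hu
  push_cast at hF0
  linear_combination hF0

theorem deriv_bounds (hH : 0 < H s) (hφ' : deriv φ s < 0) (hX : exp (φ s) * H s ^ 2 < 1 / 6) :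
    deriv H s < -H s ^ 2 / 2 ∧ -3 * H s ^ 2 ≤ deriv H s :=
  hubble_rate_bounds hH (exp_pos _) hX hφ' (h.2.2.1 s hs) (h.2.2.2 s hs) (h.deriv_constraint hU hs)

end Open

variable {a b : ℝ}

theorem deriv_scalar_neg (h : EdGB H φ (Ioo a b)) (ha : deriv φ a < 0)
    (hH : ∀ s ∈ Ioo a b, 0 < H s) : ∀ s ∈ Ioo a b, deriv φ s < 0 := by
  refine deriv_neg_of_deriv_ne_zero (fun x hx => ?_) ha fun s hs => h.deriv_ne_zero hs (hH s hs).ne'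
  rcases hx.1.eq_or_lt with rfl | hax
  · exact differentiableAt_of_deriv_ne_zero ha.ne
  · exact (h.hasDerivAt_scalar isOpen_Ioo ⟨hax, hx.2⟩).differentiableAt

theorem deriv_hubble_bounds (h : EdGB H φ (Ioo a b)) (ha : deriv φ a < 0)
    (hgood : ∀ s ∈ Ioo a b, 0 < H s ∧ exp (φ s) * H s ^ 2 < 1 / 6) :
    ∀ s ∈ Ioo a b, deriv H s < -H s ^ 2 / 2 ∧ -3 * H s ^ 2 ≤ deriv H s := fun s hs =>
  h.deriv_bounds isOpen_Ioo hs (hgood s hs).1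
    (h.deriv_scalar_neg ha (fun s hs => (hgood s hs).1) s hs) (hgood s hs).2

theorem pos_and_lt_of_forall_Ico (h : EdGB H φ (Icc a b)) (hab : a < b) (ha : deriv φ a < 0)
    (hgood : ∀ s ∈ Ico a b, 0 < H s ∧ exp (φ s) * H s ^ 2 < 1 / 6) :
    0 < H b ∧ exp (φ b) * H b ^ 2 < 1 / 6 := by
  have hI := h.mono Ioo_subset_Icc_self
  have hbounds := hI.deriv_hubble_bounds ha fun s hs => hgood s (Ioo_subset_Ico_self hs)
  refine ⟨pos_of_neg_mul_sq_le_deriv hab zero_le_three h.1.continuousOn (fun s hs => (hgood s hs).1)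
    (fun s hs => hI.hasDerivAt_hubble isOpen_Ioo hs) fun s hs => (hbounds s hs).2, ?_⟩
  have hanti : StrictAntiOn (fun s => exp (φ s) * H s ^ 2) (Icc a b) := by
    refine strictAntiOn_of_deriv_neg (convex_Icc a b)
      ((continuous_exp.comp_continuousOn h.2.1.continuousOn).mul (h.1.continuousOn.pow 2))
      fun s hs => ?_
    rw [interior_Icc] at hs
    rw [((hI.hasDerivAt_scalar isOpen_Ioo hs).exp.fun_mul
      ((hI.hasDerivAt_hubble isOpen_Ioo hs).fun_pow 2)).deriv]
    have hHs := (hgood s (Ioo_subset_Ico_self hs)).1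
    have hφ's := hI.deriv_scalar_neg ha (fun s hs => (hgood s (Ioo_subset_Ico_self hs)).1) s hs
    have hH's : deriv H s < 0 := by nlinarith [(hbounds s hs).1]
    have hE := exp_pos (φ s)
    push_cast
    rw [pow_one]
    nlinarith [mul_pos hE (mul_pos hHs hHs), mul_pos hE hHs]
  exact (hanti ⟨le_rfl, hab.le⟩ ⟨hab.le, le_rfl⟩ hab).trans (hgood a ⟨le_rfl, hab⟩).2

theorem pos_and_lt_on_Icc (h : EdGB H φ (Icc a b)) (hHa : 0 < H a)
    (hXa : exp (φ a) * H a ^ 2 < 1 / 6) (ha : deriv φ a < 0) :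
    ∀ s ∈ Icc a b, 0 < H s ∧ exp (φ s) * H s ^ 2 < 1 / 6 := by
  refine Icc_subset_of_forall_Ico_subset (s := {s | 0 < H s ∧ exp (φ s) * H s ^ 2 < 1 / 6}) ?_
    fun T hT hsub => ?_
  · have : Icc a b \ {s | 0 < H s ∧ exp (φ s) * H s ^ 2 < 1 / 6} =
        (Icc a b ∩ H ⁻¹' Iic 0) ∪ (Icc a b ∩ (fun s => exp (φ s) * H s ^ 2) ⁻¹' Ici (1 / 6)) := by
      ext s
      simp only [mem_sdiff, mem_ofPred_eq, mem_union, mem_inter_iff, mem_preimage, mem_Iic,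
        mem_Ici, not_and_or, not_lt, and_or_left]
    rw [this]
    exact (h.1.continuousOn.preimage_isClosed_of_isClosed isClosed_Icc isClosed_Iic).union
      (((continuous_exp.comp_continuousOn h.2.1.continuousOn).mul
        (h.1.continuousOn.pow 2)).preimage_isClosed_of_isClosed isClosed_Icc isClosed_Ici)
  rcases hT.1.eq_or_lt with rfl | haT
  · exact ⟨hHa, hXa⟩
  · exact (h.mono (Icc_subset_Icc_right hT.2)).pos_and_lt_of_forall_Ico haT ha hsub

theorem hubble_lt (h : EdGB H φ (Icc a b)) (hab : a < b) (hHa : 0 < H a)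
    (hXa : exp (φ a) * H a ^ 2 < 1 / 6) (ha : deriv φ a < 0) :
    H b < 1 / ((1 / 2) * (b - a) + 1 / H a) := by
  have hgood := h.pos_and_lt_on_Icc hHa hXa ha
  have hI := h.mono Ioo_subset_Icc_self
  have hbounds := hI.deriv_hubble_bounds ha fun s hs => hgood s (Ioo_subset_Icc_self hs)
  have hmono := strictMonoOn_inv_sub_mul (c := 1 / 2) (convex_Icc a b) h.1.continuousOn
    (fun s hs => (hgood s hs).1) (f' := deriv H)
    (by rw [interior_Icc]; exact fun s hs => hI.hasDerivAt_hubble isOpen_Ioo hs)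
    (by rw [interior_Icc]; exact fun s hs => by linarith [(hbounds s hs).1])
  have hlt := hmono ⟨le_rfl, hab.le⟩ ⟨hab.le, le_rfl⟩ hab
  rw [lt_one_div (hgood b ⟨hab.le, le_rfl⟩).1 (by positivity)]
  simp only [one_div] at hlt ⊢
  linarith

end EdGB

namespace NegBranchData

variable {H φ : ℝ → ℝ} {β : ℝ}

theorem exp_mul_sq_lt (hd : NegBranchData H φ β) : exp (φ 0) * H 0 ^ 2 < 1 / 6 := by
  obtain ⟨hβ, hβ6, hH0, hφ0, -⟩ := hd
  rw [hφ0, hH0, exp_zero, one_mul]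
  nlinarith [sq_sqrt (show (0 : ℝ) ≤ 6 by norm_num)]

theorem deriv_neg (hd : NegBranchData H φ β) : deriv φ 0 < 0 := by
  obtain ⟨hβ, -, -, -, hφ'0⟩ := hd
  rw [hφ'0]
  nlinarith [sqrt_nonneg (9 * β ^ 6 + 6 * β ^ 2), pow_pos hβ 3]

end NegBranchData

theorem stmt_10_general (b : EReal) (β : ℝ) (H φ : ℝ → ℝ)
    (hsys : EdGB H φ {t : ℝ | 0 ≤ t ∧ (t : EReal) < b})
    (hdata : NegBranchData H φ β) :
    ∀ t : ℝ, 0 < t → (t : EReal) < b →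
      H t < 1 / ((1 / 2) * t + 1 / β) := by
  intro t ht htb
  have hsys_t : EdGB H φ (Icc 0 t) :=
    hsys.mono fun s hs => ⟨hs.1, (EReal.coe_le_coe_iff.2 hs.2).trans_lt htb⟩
  have hH0 : H 0 = β := hdata.2.2.1
  simpa [hH0] using hsys_t.hubble_lt ht (hH0 ▸ hdata.1) hdata.exp_mul_sq_lt hdata.deriv_neg

/-- If `(H, φ)` solves the EdGB FLRW system on `[0, b)` (with `b ∈ (0, +∞]`) with
the negative-branch initial data with parameter `β`, then
`H(t) < 1/((1/2)t + 1/β)` for all `t ∈ (0, b)`. -/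
theorem stmt_10 (b : EReal) (hb : 0 < b) (β : ℝ) (H φ : ℝ → ℝ)
    (hsys : EdGB H φ {t : ℝ | 0 ≤ t ∧ (t : EReal) < b})
    (hdata : NegBranchData H φ β) :
    ∀ t : ℝ, 0 < t → (t : EReal) < b →
      H t < 1 / ((1 / 2) * t + 1 / β) :=
  stmt_10_general b β H φ hsys hdata
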